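/- arXiv:math/0702419 — 2 statements merged into one kernel-verified Lean document; each statement's English description precedes it below -/
import Mathlib

section
/- Under Assumption A with k > 0, there exist r ∈ (0,1], β > 0, M > 0 and b > 0 such that, with g(x) = x₁^r, C = [0,M]² ∪ {(x₁,x₂) ∈ [0,∞)² : x₁ ≤ k·x₂}, and η₁, η₂ i.i.d. copies of η, the two-step drift condition holds: E[(η₂²)^r · ψ(ψ(x₁,x₂)·η₁², x₁)^r] ≤ (1−β)·x₁^r − β for every x = (x₁,x₂) ∈ [0,∞)² \ C, and E[(η₂²)^r · ψ(ψ(x₁,x₂)·η₁², x₁)^r] ≤ b for every x ∈ C. -/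
/-!
For `r < 1`, subadditivity of `t ↦ t ^ r` gives `ψ(y, x₁) ^ r ≤ ω ^ r + (α y) ^ r 1[y > k x₁]`,
and Hölder's inequality with exponents `1/r`, `1/(1-r)` bounds `E[(η₂² η₁²) ^ r; A]` by
`P(A) ^ (1 - r)`, since `E[η₂² η₁²] = 1` by independence.

Outside `C` we have `x₁ > k x₂` and `x₁ ≥ m M` with `m = min 1 k`, so the second-step threshold
event `{ψ(x) η₁² > k x₁}` lies in `A = {η₁² > k m / (ω + α m)}`, whose probability `p` is `< 1`
because `η₁²` has a positive density. The two-step expectation is then at most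
`const + (α²) ^ r p ^ (1 - r) x₁ ^ r`, and the coefficient tends to `p < 1` as `r → 0`, which gives
the drift for large `x₁`. On `C`, `ψ(x) ≤ ω + α M` gives the uniform bound.
-/

open MeasureTheory ProbabilityTheory Set Filter
open scoped ENNReal Topology

lemma setLIntegral_rpow_le {α : Type*} [MeasurableSpace α] {μ : Measure α} {f : α → ℝ≥0∞}
    (hf : AEMeasurable f μ) {r : ℝ} (hr0 : 0 < r) (hr1 : r < 1) (s : Set α) :
    ∫⁻ x in s, f x ^ r ∂μ ≤ (∫⁻ x, f x ∂μ) ^ r * μ s ^ (1 - r) := by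
  have hpq : r⁻¹.HolderConjugate (1 - r)⁻¹ := .inv_inv hr0 (by linarith) (by ring)
  have h := ENNReal.lintegral_mul_le_Lp_mul_Lq (μ.restrict s) hpq
    (hf.restrict.pow_const r) (aemeasurable_const (b := 1))
  simp only [Pi.mul_apply, mul_one, one_mul, ENNReal.one_rpow, lintegral_const,
    Measure.restrict_apply_univ, one_div, inv_inv, ← ENNReal.rpow_mul, mul_inv_cancel₀ hr0.ne',
    ENNReal.rpow_one] at h
  calc ∫⁻ x in s, f x ^ r ∂μ ≤ (∫⁻ x in s, f x ∂μ) ^ r * μ s ^ (1 - r) := h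
    _ ≤ (∫⁻ x, f x ∂μ) ^ r * μ s ^ (1 - r) := by
      gcongr
      exact Measure.restrict_le_self

lemma setIntegral_rpow_le {α : Type*} [MeasurableSpace α] {μ : Measure α} [IsFiniteMeasure μ]
    {X : α → ℝ} (hX0 : ∀ x, 0 ≤ X x) (hX : Integrable X μ) {r : ℝ} (hr0 : 0 < r) (hr1 : r < 1)
    (s : Set α) :
    ∫ x in s, X x ^ r ∂μ ≤ (∫ x, X x ∂μ) ^ r * μ.real s ^ (1 - r) := by
  have hXr : AEStronglyMeasurable (fun x => X x ^ r) (μ.restrict s) :=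
    (hX.aemeasurable.pow_const r).aestronglyMeasurable.restrict
  rw [integral_eq_lintegral_of_nonneg_ae (.of_forall fun x => Real.rpow_nonneg (hX0 x) r) hXr,
    integral_eq_lintegral_of_nonneg_ae (.of_forall hX0) hX.aestronglyMeasurable,
    measureReal_def, ENNReal.toReal_rpow, ENNReal.toReal_rpow, ← ENNReal.toReal_mul]
  refine ENNReal.toReal_mono ?_ ?_
  · exact ENNReal.mul_ne_top (ENNReal.rpow_ne_top_of_nonneg hr0.le hX.lintegral_lt_top.ne)
      (ENNReal.rpow_ne_top_of_nonneg (by linarith) (measure_ne_top μ s))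
  · simp_rw [← ENNReal.ofReal_rpow_of_nonneg (hX0 _) hr0.le]
    exact setLIntegral_rpow_le hX.aemeasurable.ennreal_ofReal hr0 hr1 s

lemma MeasureTheory.Integrable.rpow_of_nonneg {α : Type*} [MeasurableSpace α] {μ : Measure α}
    [IsFiniteMeasure μ] {X : α → ℝ} (hX0 : ∀ x, 0 ≤ X x) (hX : Integrable X μ) {r : ℝ}
    (hr0 : 0 ≤ r) (hr1 : r ≤ 1) :
    Integrable (fun x => X x ^ r) μ := by
  refine ((integrable_const 1).add hX).mono' (hX.aemeasurable.pow_const r).aestronglyMeasurable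
    (.of_forall fun x => ?_)
  rw [Real.norm_of_nonneg (Real.rpow_nonneg (hX0 x) r)]
  change X x ^ r ≤ 1 + X x
  rcases le_total (X x) 1 with h | h
  · linarith [Real.rpow_le_one (hX0 x) h hr0, hX0 x]
  · linarith [Real.rpow_le_self_of_one_le h hr1]

lemma exists_rpow_mul_rpow_lt_one {a p : ℝ} (ha : 0 ≤ a) (hp0 : 0 ≤ p) (hp1 : p < 1) :
    ∃ r ∈ Ioo (0 : ℝ) 1, a ^ r * p ^ (1 - r) < 1 := by
  -- `a + 1 > 0` and `q ∈ (0, 1)` make `r ↦ (a + 1) ^ r * q ^ (1 - r)` continuous at `0`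
  set q := max p (1 / 2)
  have hq0 : 0 < q := lt_max_of_lt_right (by norm_num)
  have hq1 : q < 1 := max_lt hp1 (by norm_num)
  have hlim : Tendsto (fun r : ℝ => (a + 1) ^ r * q ^ (1 - r)) (𝓝[>] 0) (𝓝 q) := by
    have hc : Continuous (fun r : ℝ => (a + 1) ^ r * q ^ (1 - r)) := by
      fun_prop (disch := positivity)
    simpa using (hc.tendsto 0).mono_left nhdsWithin_le_nhds
  obtain ⟨r, hr, hlt⟩ := ((hlim.eventually (gt_mem_nhds hq1)).and
    (Ioo_mem_nhdsGT (show (0 : ℝ) < 1 from one_pos))).exists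
  refine ⟨r, hlt, lt_of_le_of_lt ?_ hr⟩
  have hr1 : 0 ≤ 1 - r := by linarith [hlt.2]
  exact mul_le_mul (Real.rpow_le_rpow ha (by linarith) hlt.1.le)
    (Real.rpow_le_rpow hp0 (le_max_left _ _) hr1) (by positivity) (by positivity)

lemma exists_eventually_add_mul_rpow_le {r c : ℝ} (hr : 0 < r) (hc : c < 1) (D : ℝ) :
    ∃ β > (0 : ℝ), ∀ᶠ x in atTop, D + c * x ^ r ≤ (1 - β) * x ^ r - β := by
  refine ⟨(1 - c) / 2, by linarith, ?_⟩
  filter_upwards [(tendsto_rpow_atTop hr).eventually_ge_atTop (2 * D / (1 - c) + 1)] with x hx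
  have hD : (1 - c) * (2 * D / (1 - c)) = 2 * D := mul_div_cancel₀ _ (by linarith)
  nlinarith

lemma min_one_mul_lt_of_not_le {k M x₁ x₂ : ℝ} (hk : 0 ≤ k) (hM : 0 ≤ M)
    (h : ¬((x₁ ≤ M ∧ x₂ ≤ M) ∨ x₁ ≤ k * x₂)) : min 1 k * M < x₁ := by
  simp only [not_or, not_and_or, not_le] at h
  obtain ⟨hM' | hM', hkx⟩ := h
  · nlinarith [min_le_left 1 k]
  · nlinarith [min_le_right 1 k]

lemma measureReal_setOf_lt_lt_one {Ω : Type*} [MeasurableSpace Ω]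
    {P : Measure Ω} [IsProbabilityMeasure P] {Y : Ω → ℝ} (hY : Measurable Y) {f : ℝ → ℝ≥0∞}
    (hf : Measurable f) (hfpos : ∀ x, 0 ≤ x → 0 < f x)
    (hmap : P.map Y = (volume.restrict (Ici 0)).withDensity f) {τ : ℝ} (hτ : 0 < τ) :
    P.real {z | τ < Y z} < 1 := by
  have hcover : {x | f x ≠ 0} ∩ Icc 0 τ = Icc 0 τ :=
    inter_eq_right.2 fun x hx => (hfpos x hx.1).ne'
  have hpos : P (Y ⁻¹' Icc 0 τ) ≠ 0 := by
    rw [← Measure.map_apply hY measurableSet_Icc, hmap, Ne,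
      withDensity_apply_eq_zero' hf.aemeasurable,
      hcover, Measure.restrict_apply measurableSet_Icc,
      inter_eq_left.2 Icc_subset_Ici_self, Real.volume_Icc]
    simpa using hτ
  have hsub : {z | τ < Y z} ⊆ (Y ⁻¹' Icc 0 τ)ᶜ := fun z hz hz' => (not_lt.2 hz'.2) hz
  calc P.real {z | τ < Y z} ≤ P.real (Y ⁻¹' Icc 0 τ)ᶜ := measureReal_mono hsub
    _ = 1 - P.real (Y ⁻¹' Icc 0 τ) := probReal_compl_eq_one_sub (hY measurableSet_Icc)
    _ < 1 := sub_lt_self 1 (ENNReal.toReal_pos hpos (measure_ne_top P _))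

lemma div_add_mul_lt_of_le {ω α k m x y : ℝ} (hω : 0 < ω) (hα : 0 ≤ α) (hk : 0 ≤ k)
    (hm : 0 < m) (hmx : m ≤ x) (h : k * x < (ω + α * x) * y) :
    k * m / (ω + α * m) < y := by
  have hx : 0 < x := hm.trans_le hmx
  have hy : 0 < y := pos_of_mul_pos_right (by nlinarith : 0 < (ω + α * x) * y) (by positivity)
  rw [div_lt_iff₀ (by positivity)]
  refine lt_of_mul_lt_mul_left ?_ hx.le
  nlinarith [mul_le_mul_of_nonneg_left hmx (mul_pos hω hy).le, mul_lt_mul_of_pos_left h hm]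

section ThresholdVolatility

variable {Ω : Type*} [MeasurableSpace Ω] {P : Measure Ω} [IsProbabilityMeasure P]
  {ω α k r : ℝ} {ψ : ℝ → ℝ → ℝ}

lemma psi_of_lt (hψ : ∀ x₁ x₂, ψ x₁ x₂ = ω + α * x₁ * (if k * x₂ < x₁ then 1 else 0))
    {x₁ x₂ : ℝ} (h : k * x₂ < x₁) : ψ x₁ x₂ = ω + α * x₁ := by
  rw [hψ, if_pos h, mul_one]

lemma psi_le (hψ : ∀ x₁ x₂, ψ x₁ x₂ = ω + α * x₁ * (if k * x₂ < x₁ then 1 else 0))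
    (hα : 0 ≤ α) {M x₁ x₂ : ℝ} (hM : 0 ≤ M) (h : (x₁ ≤ M ∧ x₂ ≤ M) ∨ x₁ ≤ k * x₂) :
    ψ x₁ x₂ ≤ ω + α * M := by
  rw [hψ]
  split_ifs with hkx
  · have hx₁ : x₁ ≤ M := h.elim And.left fun h' => absurd hkx (not_lt.2 h')
    nlinarith
  · nlinarith

lemma psi_nonneg (hψ : ∀ x₁ x₂, ψ x₁ x₂ = ω + α * x₁ * (if k * x₂ < x₁ then 1 else 0))
    (hω : 0 ≤ ω) (hα : 0 ≤ α) {x₁ : ℝ} (hx₁ : 0 ≤ x₁) (x₂ : ℝ) : 0 ≤ ψ x₁ x₂ := by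
  rw [hψ]
  split_ifs <;> positivity

lemma rpow_psi_le (hψ : ∀ x₁ x₂, ψ x₁ x₂ = ω + α * x₁ * (if k * x₂ < x₁ then 1 else 0))
    (hω : 0 ≤ ω) (hα : 0 ≤ α) (hr0 : 0 ≤ r) (hr1 : r ≤ 1) {y : ℝ} (hy : 0 ≤ y) (x : ℝ) :
    ψ y x ^ r ≤ ω ^ r + if k * x < y then (α * y) ^ r else 0 := by
  rw [hψ]
  split_ifs
  · rw [mul_one]
    exact Real.rpow_add_le_add_rpow hω (by positivity) hr0 hr1
  · simp

lemma integral_rpow_mul_rpow_psi_le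
    (hψ : ∀ x₁ x₂, ψ x₁ x₂ = ω + α * x₁ * (if k * x₂ < x₁ then 1 else 0))
    (hω : 0 ≤ ω) (hα : 0 ≤ α) (hr0 : 0 < r) (hr1 : r < 1) {u v : Ω → ℝ}
    (hu0 : ∀ z, 0 ≤ u z) (hv0 : ∀ z, 0 ≤ v z) (hu : ∫ z, u z ∂P = 1)
    (huv : ∫ z, u z * v z ∂P = 1) {t : ℝ} (ht : 0 ≤ t) (x : ℝ) {A : Set Ω}
    (hA : MeasurableSet A) (hsub : ∀ z, k * x < t * v z → z ∈ A) :
    ∫ z, u z ^ r * ψ (t * v z) x ^ r ∂P ≤ ω ^ r + (α * t) ^ r * P.real A ^ (1 - r) := by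
  have huI : Integrable u P := .of_integral_ne_zero (by rw [hu]; exact one_ne_zero)
  have huvI : Integrable (fun z => u z * v z) P :=
    .of_integral_ne_zero (by rw [huv]; exact one_ne_zero)
  have huv0 : ∀ z, 0 ≤ u z * v z := fun z => mul_nonneg (hu0 z) (hv0 z)
  have hpt : ∀ z, u z ^ r * ψ (t * v z) x ^ r ≤
      ω ^ r * u z ^ r + (α * t) ^ r * A.indicator (fun z => (u z * v z) ^ r) z := by
    intro z
    have hur : 0 ≤ u z ^ r := Real.rpow_nonneg (hu0 z) r
    refine (mul_le_mul_of_nonneg_left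
      (rpow_psi_le hψ hω hα hr0.le hr1.le (mul_nonneg ht (hv0 z)) x) hur).trans ?_
    rw [mul_add, mul_comm (u z ^ r)]
    gcongr ω ^ r * u z ^ r + ?_
    split_ifs with h
    · rw [indicator_of_mem (hsub z h),
        ← Real.mul_rpow (hu0 z) (mul_nonneg hα (mul_nonneg ht (hv0 z))),
        ← Real.mul_rpow (by positivity) (huv0 z),
        show u z * (α * (t * v z)) = α * t * (u z * v z) by ring]
    · rw [mul_zero]
      exact mul_nonneg (by positivity)
        (indicator_nonneg (fun z _ => Real.rpow_nonneg (huv0 z) r) z)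
  calc ∫ z, u z ^ r * ψ (t * v z) x ^ r ∂P
      ≤ ∫ z, ω ^ r * u z ^ r + (α * t) ^ r * A.indicator (fun z => (u z * v z) ^ r) z ∂P := by
        refine integral_mono_of_nonneg (.of_forall fun z => ?_) ?_ (.of_forall hpt)
        · exact mul_nonneg (Real.rpow_nonneg (hu0 z) r)
            (Real.rpow_nonneg (psi_nonneg hψ hω hα (mul_nonneg ht (hv0 z)) x) r)
        · exact ((huI.rpow_of_nonneg hu0 hr0.le hr1.le).const_mul _).add
            (((huvI.rpow_of_nonneg huv0 hr0.le hr1.le).indicator hA).const_mul _)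
    _ = ω ^ r * ∫ z in univ, u z ^ r ∂P + (α * t) ^ r * ∫ z in A, (u z * v z) ^ r ∂P := by
        rw [integral_add ((huI.rpow_of_nonneg hu0 hr0.le hr1.le).const_mul _)
            (((huvI.rpow_of_nonneg huv0 hr0.le hr1.le).indicator hA).const_mul _),
          integral_const_mul, integral_const_mul, integral_indicator hA, Measure.restrict_univ]
    _ ≤ ω ^ r * 1 + (α * t) ^ r * P.real A ^ (1 - r) := by
        gcongr
        · simpa [hu] using setIntegral_rpow_le hu0 huI hr0 hr1 (μ := P) univ
        · simpa [huv] using setIntegral_rpow_le huv0 huvI hr0 hr1 (μ := P) A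
    _ = ω ^ r + (α * t) ^ r * P.real A ^ (1 - r) := by rw [mul_one]

lemma integral_rpow_mul_rpow_psi_le_of_lt
    (hψ : ∀ x₁ x₂, ψ x₁ x₂ = ω + α * x₁ * (if k * x₂ < x₁ then 1 else 0))
    (hω : 0 < ω) (hα : 0 ≤ α) (hk : 0 ≤ k) (hr0 : 0 < r) (hr1 : r < 1) {u v : Ω → ℝ}
    (hu0 : ∀ z, 0 ≤ u z) (hv0 : ∀ z, 0 ≤ v z) (hv : Measurable v) (hu : ∫ z, u z ∂P = 1)
    (huv : ∫ z, u z * v z ∂P = 1) {m x₁ x₂ : ℝ} (hm : 0 < m) (hmx : m ≤ x₁)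
    (hkx : k * x₂ < x₁) :
    ∫ z, u z ^ r * ψ (ψ x₁ x₂ * v z) x₁ ^ r ∂P ≤
      ω ^ r + (α * ω) ^ r * P.real {z | k * m / (ω + α * m) < v z} ^ (1 - r) +
        (α * α) ^ r * P.real {z | k * m / (ω + α * m) < v z} ^ (1 - r) * x₁ ^ r := by
  have hx₁ : 0 ≤ x₁ := hm.le.trans hmx
  rw [psi_of_lt hψ hkx]
  calc ∫ z, u z ^ r * ψ ((ω + α * x₁) * v z) x₁ ^ r ∂P
      ≤ ω ^ r + (α * (ω + α * x₁)) ^ r * P.real {z | k * m / (ω + α * m) < v z} ^ (1 - r) :=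
        integral_rpow_mul_rpow_psi_le hψ hω.le hα hr0 hr1 hu0 hv0 hu huv (by positivity) x₁
          (measurableSet_lt measurable_const hv) fun _ hz => div_add_mul_lt_of_le hω hα hk hm hmx hz
    _ ≤ ω ^ r + ((α * ω) ^ r + (α * α) ^ r * x₁ ^ r) *
          P.real {z | k * m / (ω + α * m) < v z} ^ (1 - r) := by
        gcongr
        rw [mul_add, ← mul_assoc, ← Real.mul_rpow (mul_self_nonneg α) hx₁]
        exact Real.rpow_add_le_add_rpow (by positivity) (by positivity) hr0.le hr1.le
    _ = _ := by ring

lemma integral_rpow_mul_rpow_psi_le_of_le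
    (hψ : ∀ x₁ x₂, ψ x₁ x₂ = ω + α * x₁ * (if k * x₂ < x₁ then 1 else 0))
    (hω : 0 ≤ ω) (hα : 0 ≤ α) (hr0 : 0 < r) (hr1 : r < 1) {u v : Ω → ℝ}
    (hu0 : ∀ z, 0 ≤ u z) (hv0 : ∀ z, 0 ≤ v z) (hu : ∫ z, u z ∂P = 1)
    (huv : ∫ z, u z * v z ∂P = 1) {B x₁ x₂ : ℝ} (hx₁ : 0 ≤ x₁) (hB : ψ x₁ x₂ ≤ B) :
    ∫ z, u z ^ r * ψ (ψ x₁ x₂ * v z) x₁ ^ r ∂P ≤ ω ^ r + (α * B) ^ r := by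
  have hψ0 := psi_nonneg hψ hω hα hx₁ x₂
  calc ∫ z, u z ^ r * ψ (ψ x₁ x₂ * v z) x₁ ^ r ∂P
      ≤ ω ^ r + (α * ψ x₁ x₂) ^ r * P.real univ ^ (1 - r) :=
        integral_rpow_mul_rpow_psi_le hψ hω hα hr0 hr1 hu0 hv0 hu huv hψ0 x₁
          MeasurableSet.univ fun z _ => mem_univ z
    _ ≤ ω ^ r + (α * B) ^ r := by
        rw [probReal_univ, Real.one_rpow, mul_one]
        gcongr

end ThresholdVolatility

theorem stmt12_general
    {Ω' : Type*} [MeasurableSpace Ω'] (P : Measure Ω') [IsProbabilityMeasure P]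
    (ω α k : ℝ) (hω : 0 < ω) (hα : 0 ≤ α) (hk : 0 < k)
    (ψ : ℝ → ℝ → ℝ)
    (hψ : ∀ x₁ x₂, ψ x₁ x₂ = ω + α * x₁ * (if k * x₂ < x₁ then 1 else 0))
    (η₁ η₂ : Ω' → ℝ) (hη₁ : Measurable η₁) (hη₂ : Measurable η₂)
    (hindep : IndepFun η₁ η₂ P)
    (f : ℝ → ℝ≥0∞) (hf : Measurable f) (hfpos : ∀ x, 0 ≤ x → 0 < f x)
    (hd₁ : Measure.map (fun z => (η₁ z) ^ 2) P = (volume.restrict (Ici (0 : ℝ))).withDensity f)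
    (hv₁ : ∫ z, (η₁ z) ^ 2 ∂P = 1) (hv₂ : ∫ z, (η₂ z) ^ 2 ∂P = 1) :
    ∃ r ∈ Ioc (0 : ℝ) 1, ∃ β > (0 : ℝ), ∃ M > (0 : ℝ), ∃ b > (0 : ℝ),
      ∀ x₁ x₂ : ℝ, 0 ≤ x₁ → 0 ≤ x₂ →
        (¬((x₁ ≤ M ∧ x₂ ≤ M) ∨ x₁ ≤ k * x₂) →
          ∫ z, ((η₂ z) ^ 2) ^ r * (ψ (ψ x₁ x₂ * (η₁ z) ^ 2) x₁) ^ r ∂P ≤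
            (1 - β) * x₁ ^ r - β) ∧
        (((x₁ ≤ M ∧ x₂ ≤ M) ∨ x₁ ≤ k * x₂) →
          ∫ z, ((η₂ z) ^ 2) ^ r * (ψ (ψ x₁ x₂ * (η₁ z) ^ 2) x₁) ^ r ∂P ≤ b) := by
  have huv : ∫ z, η₂ z ^ 2 * η₁ z ^ 2 ∂P = 1 := by
    have h := (hindep.symm.comp (measurable_id.pow_const 2)
      (measurable_id.pow_const 2)).integral_fun_mul_eq_mul_integral
      (hη₂.pow_const 2).aestronglyMeasurable (hη₁.pow_const 2).aestronglyMeasurable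
    simpa [Function.comp_def, hv₁, hv₂] using h
  set m := min 1 k
  have hm : 0 < m := lt_min one_pos hk
  set A := {z | k * m / (ω + α * m) < η₁ z ^ 2}
  have hpA : P.real A < 1 :=
    measureReal_setOf_lt_lt_one (hη₁.pow_const 2) hf hfpos hd₁ (by positivity)
  obtain ⟨r, hr, hc⟩ := exists_rpow_mul_rpow_lt_one (mul_self_nonneg α) measureReal_nonneg hpA
  obtain ⟨β, hβ, hdrift⟩ :=
    exists_eventually_add_mul_rpow_le hr.1 hc (ω ^ r + (α * ω) ^ r * P.real A ^ (1 - r))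
  obtain ⟨M₀, hM₀⟩ := (hdrift.and (eventually_ge_atTop m)).exists_forall_of_atTop
  have hM : 0 < max M₀ m / m := div_pos (lt_max_of_lt_right hm) hm
  refine ⟨r, ⟨hr.1, hr.2.le⟩, β, hβ, max M₀ m / m, hM,
    ω ^ r + (α * (ω + α * (max M₀ m / m))) ^ r, by positivity,
    fun x₁ x₂ hx₁ _ => ⟨fun hout => ?_, fun hC => ?_⟩⟩
  · have hx : max M₀ m ≤ x₁ := by
      have h := (min_one_mul_lt_of_not_le hk.le hM.le hout).le
      rwa [mul_div_cancel₀ _ hm.ne'] at h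
    obtain ⟨hbound, hmx⟩ := hM₀ x₁ (le_of_max_le_left hx)
    exact (integral_rpow_mul_rpow_psi_le_of_lt hψ hω hα hk.le hr.1 hr.2 (fun _ => sq_nonneg _)
      (fun _ => sq_nonneg _) (hη₁.pow_const 2) hv₂ huv hm hmx
      (not_le.1 (not_or.1 hout).2)).trans hbound
  · exact integral_rpow_mul_rpow_psi_le_of_le hψ hω.le hα hr.1 hr.2 (fun _ => sq_nonneg _)
      (fun _ => sq_nonneg _) hv₂ huv hx₁ (psi_le hψ hα hM.le hC)

/-- Two-step drift condition: under Assumption A with `k > 0`, there are `r ∈ (0,1]`,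
`β > 0`, `M > 0`, `b > 0` such that, with `C = [0,M]² ∪ {x₁ ≤ k x₂}`,
`E[(η₂²)^r ψ(ψ(x) η₁², x₁)^r] ≤ (1-β) x₁^r - β` outside `C` and `≤ b` on `C`. -/
theorem stmt12
    {Ω' : Type*} [MeasurableSpace Ω'] (P : Measure Ω') [IsProbabilityMeasure P]
    (ω α k : ℝ) (hω : 0 < ω) (hα : 0 ≤ α) (hk : 0 < k)
    (ψ : ℝ → ℝ → ℝ)
    (hψ : ∀ x₁ x₂, ψ x₁ x₂ = ω + α * x₁ * (if k * x₂ < x₁ then 1 else 0))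
    (η₁ η₂ : Ω' → ℝ) (hη₁ : Measurable η₁) (hη₂ : Measurable η₂)
    (hindep : IndepFun η₁ η₂ P)
    (f : ℝ → ℝ≥0∞) (hf : Measurable f) (hfpos : ∀ x, 0 ≤ x → 0 < f x)
    (hd₁ : Measure.map (fun z => (η₁ z) ^ 2) P = (volume.restrict (Ici (0 : ℝ))).withDensity f)
    (hd₂ : Measure.map (fun z => (η₂ z) ^ 2) P = (volume.restrict (Ici (0 : ℝ))).withDensity f)
    (hint₁ : Integrable η₁ P) (hint₂ : Integrable η₂ P)
    (hm₁ : ∫ z, η₁ z ∂P = 0) (hm₂ : ∫ z, η₂ z ∂P = 0)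
    (hv₁ : ∫ z, (η₁ z) ^ 2 ∂P = 1) (hv₂ : ∫ z, (η₂ z) ^ 2 ∂P = 1) :
    ∃ r ∈ Ioc (0 : ℝ) 1, ∃ β > (0 : ℝ), ∃ M > (0 : ℝ), ∃ b > (0 : ℝ),
      ∀ x₁ x₂ : ℝ, 0 ≤ x₁ → 0 ≤ x₂ →
        (¬((x₁ ≤ M ∧ x₂ ≤ M) ∨ x₁ ≤ k * x₂) →
          ∫ z, ((η₂ z) ^ 2) ^ r * (ψ (ψ x₁ x₂ * (η₁ z) ^ 2) x₁) ^ r ∂P ≤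
            (1 - β) * x₁ ^ r - β) ∧
        (((x₁ ≤ M ∧ x₂ ≤ M) ∨ x₁ ≤ k * x₂) →
          ∫ z, ((η₂ z) ^ 2) ^ r * (ψ (ψ x₁ x₂ * (η₁ z) ^ 2) x₁) ^ r ∂P ≤ b) :=
  stmt12_general P ω α k hω hα hk ψ hψ η₁ η₂ hη₁ hη₂ hindep f hf hfpos hd₁ hv₁ hv₂
end

section
/- Under Assumption A with k > 0, let p be a positive integer with μ_{2p} = E[(η²)^p] < ∞, and suppose there exists an integer m ≥ 1 with μ_{2m}, μ_{2mp} < ∞ such that α^{2p+m−1} · μ_{2p} · μ_{2m}^{(m−1)/m} · μ_{2mp}^{1/m} < k^{m−1} (i.e., condition (3.7): 0 ≤ α < max_m (k^{m−1}/(μ_{2p}·μ_{2m}^{1−1/m}·μ_{2mp}^{1/m}))^{1/(2p+m−1)}). Then there exist β > 0, M > 0 and b > 0 such that, with C = [0,M]² ∪ {(x₁,x₂) ∈ [0,∞)² : x₁ ≤ k·x₂} and η₁, η₂ i.i.d. copies of η: E[(η₂²)^p · ψ(ψ(x₁,x₂)·η₁², x₁)^p] ≤ (1−β)·x₁^p −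 β for every x ∈ [0,∞)² \ C, and E[(η₂²)^p · ψ(ψ(x₁,x₂)·η₁², x₁)^p] ≤ b for every x ∈ C. -/
/-!
By independence the expectation factors as `E[η₂^{2p}] · E[ψ(ψ(x) η₁², x₁)^p]`.
Off `C` we have `x₁ > k x₂`, so `ψ(x) = ω + α x₁ =: a`, and the inner `ψ` exceeds `ω` only on
the tail event `{η₁² > t}`, `t = k x₁ / a`, where it is at most `(ω / t + α a) η₁²`. Hölder's
inequality with exponents `m` and `m / (m - 1)`, followed by Markov's inequality for `η₁^{2m}`,
bounds `E[η₁^{2p}; η₁² > t]` by `μ_{2m}^{(m-1)/m} μ_{2mp}^{1/m} t^{-(m-1)}`. As `x₁ → ∞`,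
`t⁻¹ → α / k` and `ω / t + α a ∼ α² x₁`, so the whole bound is `x₁^p` times a factor tending to
`α^{2p+m-1} μ_{2p} μ_{2m}^{(m-1)/m} μ_{2mp}^{1/m} / k^{m-1} < 1`. On `C`, `ψ(x) ≤ ω + α M`,
so the integrand is dominated by a polynomial of degree `p` in `η₁²`.
-/

open MeasureTheory ProbabilityTheory Set Filter
open scoped ENNReal

section TailMoment

variable {Ω : Type*} [MeasurableSpace Ω] {P : Measure Ω} [IsFiniteMeasure P] {Y : Ω → ℝ} {t : ℝ}
  {p m : ℕ}

lemma measureReal_lt_le_integral_pow_div (hY0 : 0 ≤ Y) (hYm : Integrable (fun z => Y z ^ m) P)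
    (ht : 0 < t) : P.real {z | t < Y z} ≤ (∫ z, Y z ^ m ∂P) / t ^ m := by
  rw [le_div_iff₀ (by positivity), mul_comm]
  refine le_trans ?_ (mul_meas_ge_le_integral_of_nonneg
    (.of_forall fun z => pow_nonneg (hY0 z) m) hYm (t ^ m))
  exact mul_le_mul_of_nonneg_left
    (measureReal_mono fun z (hz : t < Y z) => pow_le_pow_left₀ ht.le hz.le m) (by positivity)

lemma setIntegral_pow_tail_le (hY : Measurable Y) (hY0 : 0 ≤ Y) (hm : 1 ≤ m)
    (hYm : Integrable (fun z => Y z ^ m) P) (hYmp : Integrable (fun z => Y z ^ (m * p)) P)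
    (ht : 0 < t) :
    ∫ z in {z | t < Y z}, Y z ^ p ∂P ≤
      (∫ z, Y z ^ m ∂P) ^ (((m : ℝ) - 1) / m) * (∫ z, Y z ^ (m * p) ∂P) ^ (1 / (m : ℝ)) *
        t⁻¹ ^ (m - 1) := by
  obtain rfl | hm := hm.eq_or_lt
  · simpa using setIntegral_le_integral (by simpa using hYmp)
      (.of_forall fun z => pow_nonneg (hY0 z) p)
  have hm' : (1 : ℝ) < m := by exact_mod_cast hm
  set S := {z | t < Y z}
  have hpq : (m : ℝ).HolderConjugate (m / (m - 1)) :=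
    (Real.holderConjugate_iff_eq_conjExponent hm').2 rfl
  have hYp_mem : MemLp (fun z => Y z ^ p) (ENNReal.ofReal m) (P.restrict S) := by
    refine MemLp.restrict S ((integrable_norm_rpow_iff (hY.pow_const p).aestronglyMeasurable
      (by simp only [ENNReal.ofReal_natCast, ne_eq, Nat.cast_eq_zero]; omega) (by simp)).1
      (hYmp.congr (.of_forall fun z => ?_)))
    simp only [ENNReal.toReal_ofReal (Nat.cast_nonneg m),
      Real.norm_of_nonneg (pow_nonneg (hY0 z) p), Real.rpow_natCast, ← pow_mul, mul_comm]
  have holder := integral_mul_le_Lp_mul_Lq_of_nonneg hpq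
    (.of_forall fun z => pow_nonneg (hY0 z) p) (.of_forall fun _ => zero_le_one) hYp_mem
    (memLp_const (1 : ℝ))
  simp only [mul_one, Real.one_rpow, integral_const, smul_eq_mul, measureReal_restrict_apply_univ,
    one_div_div] at holder
  have hmoment : ∫ z in S, (Y z ^ p) ^ (m : ℝ) ∂P ≤ ∫ z, Y z ^ (m * p) ∂P := by
    simp_rw [Real.rpow_natCast, ← pow_mul, mul_comm p m]
    exact setIntegral_le_integral hYmp (.of_forall fun z => pow_nonneg (hY0 z) _)
  have htail : P.real S ^ (((m : ℝ) - 1) / m) ≤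
      (∫ z, Y z ^ m ∂P) ^ (((m : ℝ) - 1) / m) * t⁻¹ ^ (m - 1) := by
    calc P.real S ^ (((m : ℝ) - 1) / m)
        ≤ ((∫ z, Y z ^ m ∂P) / t ^ m) ^ (((m : ℝ) - 1) / m) := by
          gcongr
          exact measureReal_lt_le_integral_pow_div hY0 hYm ht
      _ = _ := by
          have hexp : (m : ℝ) * (((m : ℝ) - 1) / m) = ((m - 1 : ℕ) : ℝ) := by
            push_cast [hm.le]
            field_simp
          rw [Real.div_rpow (integral_nonneg fun z => pow_nonneg (hY0 z) m) (by positivity),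
            ← Real.rpow_natCast t m, ← Real.rpow_mul ht.le, hexp, Real.rpow_natCast,
            div_eq_mul_inv, inv_pow]
  calc ∫ z in S, Y z ^ p ∂P
      ≤ (∫ z in S, (Y z ^ p) ^ (m : ℝ) ∂P) ^ (1 / (m : ℝ)) * P.real S ^ (((m : ℝ) - 1) / m) :=
        holder
    _ ≤ (∫ z, Y z ^ (m * p) ∂P) ^ (1 / (m : ℝ)) *
          ((∫ z, Y z ^ m ∂P) ^ (((m : ℝ) - 1) / m) * t⁻¹ ^ (m - 1)) := by
        gcongr
        · exact Real.rpow_nonneg (integral_nonneg fun z => pow_nonneg (hY0 z) _) _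
        · exact integral_nonneg fun z => Real.rpow_nonneg (pow_nonneg (hY0 z) p) _
    _ = _ := by ring

end TailMoment

lemma ProbabilityTheory.IndepFun.integral_sq_pow_mul_comp {Ω : Type*} [MeasurableSpace Ω]
    {P : Measure Ω} [IsProbabilityMeasure P] {η₁ η₂ : Ω → ℝ} (hη₁ : Measurable η₁)
    (hη₂ : Measurable η₂)
    (hindep : IndepFun η₁ η₂ P) (hlaw : P.map (fun z => η₂ z ^ 2) = P.map (fun z => η₁ z ^ 2))
    (p : ℕ) {g : ℝ → ℝ} (hg : Measurable g) :
    ∫ z, (η₂ z ^ 2) ^ p * g (η₁ z) ∂P = (∫ z, (η₁ z ^ 2) ^ p ∂P) * ∫ z, g (η₁ z) ∂P := by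
  rw [hindep.symm.integral_fun_comp_mul_comp (f := fun y => (y ^ 2) ^ p) hη₂.aemeasurable
    hη₁.aemeasurable (by fun_prop) hg.aestronglyMeasurable]
  congr 1
  exact (IdentDistrib.mk (by fun_prop) (by fun_prop) hlaw).comp (measurable_id.pow_const p)
    |>.integral_eq

noncomputable def thresholdVol (ω α k x₁ x₂ : ℝ) : ℝ := ω + α * x₁ * (if k * x₂ < x₁ then 1 else 0)

section ThresholdVol

variable {ω α k x₁ x₂ : ℝ}

lemma thresholdVol_of_lt (h : k * x₂ < x₁) : thresholdVol ω α k x₁ x₂ = ω + α * x₁ := by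
  simp [thresholdVol, h]

lemma thresholdVol_nonneg (hω : 0 ≤ ω) (hα : 0 ≤ α) (hx₁ : 0 ≤ x₁) :
    0 ≤ thresholdVol ω α k x₁ x₂ := by
  unfold thresholdVol
  split_ifs <;> positivity

lemma thresholdVol_le (hα : 0 ≤ α) (hx₁ : 0 ≤ x₁) : thresholdVol ω α k x₁ x₂ ≤ ω + α * x₁ := by
  unfold thresholdVol
  split_ifs <;> nlinarith

lemma thresholdVol_le_of_le_or_le {M : ℝ} (hα : 0 ≤ α) (hM : 0 ≤ M) (hx₁ : 0 ≤ x₁)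
    (h : (x₁ ≤ M ∧ x₂ ≤ M) ∨ x₁ ≤ k * x₂) : thresholdVol ω α k x₁ x₂ ≤ ω + α * M := by
  rcases h with ⟨h, -⟩ | h
  · exact (thresholdVol_le hα hx₁).trans (by gcongr)
  · simp only [thresholdVol, h.not_gt, if_false, mul_zero, add_zero]
    nlinarith

lemma measurable_thresholdVol : Measurable fun x₁ => thresholdVol ω α k x₁ x₂ := by
  unfold thresholdVol
  exact measurable_const.add ((measurable_const.mul measurable_id).mul
    (Measurable.ite measurableSet_Ioi measurable_const measurable_const))

lemma thresholdVol_mul_pow_le {a t y : ℝ} (p : ℕ) (hω : 0 ≤ ω) (hα : 0 ≤ α) (ha : 0 < a)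
    (ht : 0 < t) (hkx : k * x₂ = a * t) (hy : 0 ≤ y) :
    thresholdVol ω α k (a * y) x₂ ^ p ≤
      ω ^ p + (ω / t + α * a) ^ p * (Ioi t).indicator (· ^ p) y := by
  by_cases hty : t < y
  · have hω_le : ω ≤ ω / t * y := by
      rw [div_mul_eq_mul_div, le_div_iff₀ ht]
      exact mul_le_mul_of_nonneg_left hty.le hω
    rw [thresholdVol_of_lt (by rw [hkx]; gcongr), indicator_of_mem (mem_Ioi.2 hty), ← mul_pow]
    calc (ω + α * (a * y)) ^ p ≤ ((ω / t + α * a) * y) ^ p := by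
          gcongr
          linarith
      _ ≤ _ := le_add_of_nonneg_left (by positivity)
  · have hnot : ¬ k * x₂ < a * y := by
      rw [hkx]
      exact fun h => hty (lt_of_mul_lt_mul_left h ha.le)
    simp [thresholdVol, hnot, indicator_of_notMem (show y ∉ Ioi t from hty)]

lemma thresholdVol_mul_pow_le_two_pow {v V y : ℝ} (p : ℕ) (hω : 0 ≤ ω) (hα : 0 ≤ α)
    (hv : 0 ≤ v) (hvV : v ≤ V) (hy : 0 ≤ y) :
    thresholdVol ω α k (v * y) x₂ ^ p ≤ 2 ^ (p - 1) * (ω ^ p + (α * V) ^ p * y ^ p) := by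
  calc thresholdVol ω α k (v * y) x₂ ^ p ≤ (ω + α * V * y) ^ p := by
        gcongr
        · exact thresholdVol_nonneg hω hα (by positivity)
        · exact (thresholdVol_le hα (by positivity)).trans (by rw [mul_assoc]; gcongr)
    _ ≤ _ := by
        have hV : 0 ≤ V := hv.trans hvV
        rw [← mul_pow]
        exact add_pow_le hω (by positivity) p

end ThresholdVol

section DriftRate

variable {ω α k K : ℝ} {p m : ℕ}

/-- With `u = x⁻¹`, `x ^ p * driftRate ω α k K p m u` is the bound of
`integral_thresholdVol_pow_le` at level `a = ω + α x` and threshold `t = k x / a`. -/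
noncomputable def driftRate (ω α k K : ℝ) (p m : ℕ) (u : ℝ) : ℝ :=
  (ω * u) ^ p + ((ω * u + α) * (ω * u / k + α)) ^ p * K * ((ω * u + α) / k) ^ (m - 1)

lemma continuous_driftRate : Continuous (driftRate ω α k K p m) := by
  unfold driftRate
  fun_prop

lemma driftRate_zero (hp : p ≠ 0) (hm : 1 ≤ m) :
    driftRate ω α k K p m 0 = α ^ (2 * p + m - 1) * K / k ^ (m - 1) := by
  rw [driftRate, show 2 * p + m - 1 = 2 * p + (m - 1) by omega, pow_add, pow_mul]
  simp only [mul_zero, hp, ne_eq, not_false_eq_true, zero_pow, zero_add, zero_div, div_pow]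
  ring

end DriftRate

section Integral

variable {Ω : Type*} [MeasurableSpace Ω] {P : Measure Ω} [IsProbabilityMeasure P] {Y : Ω → ℝ}
  {ω α k x : ℝ} {p m : ℕ}

lemma integral_thresholdVol_pow_le {a t : ℝ} (hY : Measurable Y) (hY0 : 0 ≤ Y) (hm : 1 ≤ m)
    (hYp : Integrable (fun z => Y z ^ p) P) (hYm : Integrable (fun z => Y z ^ m) P)
    (hYmp : Integrable (fun z => Y z ^ (m * p)) P)
    (hω : 0 ≤ ω) (hα : 0 ≤ α) (ha : 0 < a) (ht : 0 < t) (hkx : k * x = a * t) :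
    ∫ z, thresholdVol ω α k (a * Y z) x ^ p ∂P ≤
      ω ^ p + (ω / t + α * a) ^ p *
        ((∫ z, Y z ^ m ∂P) ^ (((m : ℝ) - 1) / m) * (∫ z, Y z ^ (m * p) ∂P) ^ (1 / (m : ℝ)) *
          t⁻¹ ^ (m - 1)) := by
  have htail : (fun z => (Ioi t).indicator (· ^ p) (Y z)) =
      {z | t < Y z}.indicator (fun z => Y z ^ p) :=
    funext fun z => (indicator_comp_right (g := (· ^ p)) Y).symm
  have hS : MeasurableSet {z | t < Y z} := measurableSet_lt measurable_const hY
  have htail_int : Integrable (fun z => (Ioi t).indicator (· ^ p) (Y z)) P := by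
    rw [htail]
    exact hYp.indicator hS
  calc ∫ z, thresholdVol ω α k (a * Y z) x ^ p ∂P
      ≤ ∫ z, (ω ^ p + (ω / t + α * a) ^ p * (Ioi t).indicator (· ^ p) (Y z)) ∂P :=
        integral_mono_of_nonneg
          (.of_forall fun z => pow_nonneg (thresholdVol_nonneg hω hα (mul_nonneg ha.le (hY0 z))) p)
          ((integrable_const _).add (htail_int.const_mul _))
          (.of_forall fun z => thresholdVol_mul_pow_le p hω hα ha ht hkx (hY0 z))
    _ = ω ^ p + (ω / t + α * a) ^ p * ∫ z in {z | t < Y z}, Y z ^ p ∂P := by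
        rw [integral_add (integrable_const _) (htail_int.const_mul _), integral_const,
          integral_const_mul, htail, integral_indicator hS]
        simp
    _ ≤ _ := by
        gcongr
        exact setIntegral_pow_tail_le hY hY0 hm hYm hYmp ht

lemma integral_thresholdVol_pow_le_of_le {v V : ℝ} (hY0 : 0 ≤ Y)
    (hYp : Integrable (fun z => Y z ^ p) P) (hω : 0 ≤ ω) (hα : 0 ≤ α) (hv : 0 ≤ v)
    (hvV : v ≤ V) :
    ∫ z, thresholdVol ω α k (v * Y z) x ^ p ∂P ≤
      2 ^ (p - 1) * (ω ^ p + (α * V) ^ p * ∫ z, Y z ^ p ∂P) := by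
  calc ∫ z, thresholdVol ω α k (v * Y z) x ^ p ∂P
      ≤ ∫ z, 2 ^ (p - 1) * (ω ^ p + (α * V) ^ p * Y z ^ p) ∂P :=
        integral_mono_of_nonneg
          (.of_forall fun z => pow_nonneg (thresholdVol_nonneg hω hα (mul_nonneg hv (hY0 z))) p)
          (((integrable_const _).add (hYp.const_mul _)).const_mul _)
          (.of_forall fun z => thresholdVol_mul_pow_le_two_pow p hω hα hv hvV (hY0 z))
    _ = _ := by
        rw [integral_const_mul, integral_add (integrable_const _) (hYp.const_mul _),
          integral_const, integral_const_mul]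
        simp

lemma integral_thresholdVol_pow_le_driftRate (hY : Measurable Y) (hY0 : 0 ≤ Y) (hm : 1 ≤ m)
    (hYp : Integrable (fun z => Y z ^ p) P) (hYm : Integrable (fun z => Y z ^ m) P)
    (hYmp : Integrable (fun z => Y z ^ (m * p)) P)
    (hω : 0 < ω) (hα : 0 ≤ α) (hk : 0 < k) (hx : 0 < x) :
    ∫ z, thresholdVol ω α k ((ω + α * x) * Y z) x ^ p ∂P ≤
      x ^ p * driftRate ω α k
        ((∫ z, Y z ^ m ∂P) ^ (((m : ℝ) - 1) / m) * (∫ z, Y z ^ (m * p) ∂P) ^ (1 / (m : ℝ)))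
        p m x⁻¹ := by
  have ha : ω + α * x = x * (ω * x⁻¹ + α) := by field_simp
  have hkx : k * x = (ω + α * x) * (k / (ω * x⁻¹ + α)) := by rw [ha]; field_simp
  refine (integral_thresholdVol_pow_le hY hY0 hm hYp hYm hYmp hω.le hα (by positivity)
    (by positivity) hkx).trans_eq ?_
  have hs : ω / (k / (ω * x⁻¹ + α)) + α * (ω + α * x) =
      x * ((ω * x⁻¹ + α) * (ω * x⁻¹ / k + α)) := by
    rw [ha]; field_simp
  have hxx : x ^ p * x⁻¹ ^ p = 1 := by rw [← mul_pow, mul_inv_cancel₀ hx.ne', one_pow]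
  rw [hs, inv_div, driftRate, mul_pow x, mul_pow ω]
  linear_combination (-ω ^ p) * hxx

end Integral

lemma exists_pos_eventually_pow_mul_le {G : ℝ → ℝ} (hG : ContinuousAt G 0) (hG0 : G 0 < 1)
    (p : ℕ) : ∃ β > 0, ∀ᶠ x in atTop, x ^ p * G x⁻¹ ≤ (1 - β) * x ^ p - β := by
  refine ⟨(1 - G 0) / 4, by linarith, ?_⟩
  have hlim : ∀ᶠ x in atTop, G x⁻¹ < 1 - 2 * ((1 - G 0) / 4) :=
    (hG.tendsto.comp tendsto_inv_atTop_zero).eventually (gt_mem_nhds (by linarith))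
  filter_upwards [hlim, eventually_ge_atTop 1] with x hGx hx
  have hxp : 1 ≤ x ^ p := one_le_pow₀ hx
  nlinarith

lemma exists_pos_forall_of_eventually_atTop {Q : ℝ → Prop} {k : ℝ} (hk : 0 < k)
    (hQ : ∀ᶠ x in atTop, Q x) :
    ∃ M > 0, ∀ x₁ x₂, k * x₂ < x₁ → ¬(x₁ ≤ M ∧ x₂ ≤ M) → Q x₁ := by
  obtain ⟨N, hN⟩ := eventually_atTop.1 hQ
  refine ⟨max (max N (N / k)) 1, by positivity, fun x₁ x₂ hlt hout => hN x₁ ?_⟩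
  have hNM : N ≤ max (max N (N / k)) 1 := le_max_of_le_left (le_max_left _ _)
  have hNkM : N ≤ k * max (max N (N / k)) 1 :=
    (div_le_iff₀' hk).1 (le_max_of_le_left (le_max_right _ _))
  by_cases hx₁ : x₁ ≤ max (max N (N / k)) 1
  · have hx₂ : max (max N (N / k)) 1 < x₂ := not_le.1 fun h => hout ⟨hx₁, h⟩
    nlinarith
  · linarith [not_le.1 hx₁]

theorem stmt17_general
    {Ω' : Type*} [MeasurableSpace Ω'] (P : Measure Ω') [IsProbabilityMeasure P]
    (ω α k : ℝ) (hω : 0 < ω) (hα : 0 ≤ α) (hk : 0 < k)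
    (ψ : ℝ → ℝ → ℝ)
    (hψ : ∀ x₁ x₂, ψ x₁ x₂ = ω + α * x₁ * (if k * x₂ < x₁ then 1 else 0))
    (η₁ η₂ : Ω' → ℝ) (hη₁ : Measurable η₁) (hη₂ : Measurable η₂)
    (hindep : IndepFun η₁ η₂ P)
    (f : ℝ → ℝ≥0∞)
    (hd₁ : Measure.map (fun z => (η₁ z) ^ 2) P = (volume.restrict (Ici (0 : ℝ))).withDensity f)
    (hd₂ : Measure.map (fun z => (η₂ z) ^ 2) P = (volume.restrict (Ici (0 : ℝ))).withDensity f)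
    (p : ℕ) (hp : 1 ≤ p) (m : ℕ) (hm1 : 1 ≤ m)
    (hμ2p : Integrable (fun z => ((η₁ z) ^ 2) ^ p) P)
    (hμ2m : Integrable (fun z => ((η₁ z) ^ 2) ^ m) P)
    (hμ2mp : Integrable (fun z => ((η₁ z) ^ 2) ^ (m * p)) P)
    (hcond : α ^ (2 * p + m - 1) * (∫ z, ((η₁ z) ^ 2) ^ p ∂P) *
        (∫ z, ((η₁ z) ^ 2) ^ m ∂P) ^ (((m : ℝ) - 1) / (m : ℝ)) *
        (∫ z, ((η₁ z) ^ 2) ^ (m * p) ∂P) ^ (1 / (m : ℝ)) < k ^ (m - 1)) :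
    ∃ β > (0 : ℝ), ∃ M > (0 : ℝ), ∃ b > (0 : ℝ),
      ∀ x₁ x₂ : ℝ, 0 ≤ x₁ → 0 ≤ x₂ →
        (¬((x₁ ≤ M ∧ x₂ ≤ M) ∨ x₁ ≤ k * x₂) →
          ∫ z, ((η₂ z) ^ 2) ^ p * (ψ (ψ x₁ x₂ * (η₁ z) ^ 2) x₁) ^ p ∂P ≤
            (1 - β) * x₁ ^ p - β) ∧
        (((x₁ ≤ M ∧ x₂ ≤ M) ∨ x₁ ≤ k * x₂) →
          ∫ z, ((η₂ z) ^ 2) ^ p * (ψ (ψ x₁ x₂ * (η₁ z) ^ 2) x₁) ^ p ∂P ≤ b) := by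
  obtain rfl : ψ = thresholdVol ω α k := funext fun x₁ => funext (hψ x₁)
  have hY0 : ∀ z, 0 ≤ η₁ z ^ 2 := fun z => sq_nonneg _
  set μp := ∫ z, ((η₁ z) ^ 2) ^ p ∂P
  have hμp : 0 ≤ μp := integral_nonneg fun z => pow_nonneg (hY0 z) p
  have hfactor : ∀ v x₁, ∫ z, ((η₂ z) ^ 2) ^ p * thresholdVol ω α k (v * η₁ z ^ 2) x₁ ^ p ∂P =
      μp * ∫ z, thresholdVol ω α k (v * η₁ z ^ 2) x₁ ^ p ∂P := fun v x₁ =>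
    hindep.integral_sq_pow_mul_comp hη₁ hη₂ (hd₂.trans hd₁.symm) p
      (g := fun y => thresholdVol ω α k (v * y ^ 2) x₁ ^ p)
      ((measurable_thresholdVol.comp (by fun_prop)).pow_const p)
  set K := (∫ z, ((η₁ z) ^ 2) ^ m ∂P) ^ (((m : ℝ) - 1) / m) *
    (∫ z, ((η₁ z) ^ 2) ^ (m * p) ∂P) ^ (1 / (m : ℝ))
  have hG0 : μp * driftRate ω α k K p m 0 < 1 := by
    rw [driftRate_zero (by omega) hm1, mul_div_assoc', div_lt_one (by positivity)]
    linarith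
  obtain ⟨β, hβ, hdrift⟩ := exists_pos_eventually_pow_mul_le
    (G := fun u => μp * driftRate ω α k K p m u)
    (continuous_const.mul continuous_driftRate).continuousAt hG0 p
  obtain ⟨M, hM, hM_drift⟩ := exists_pos_forall_of_eventually_atTop hk hdrift
  refine ⟨β, hβ, M, hM, max (μp * (2 ^ (p - 1) * (ω ^ p + (α * (ω + α * M)) ^ p * μp))) 1,
    by positivity, fun x₁ x₂ hx₁ hx₂ => ⟨fun hC => ?_, fun hC => ?_⟩⟩
  · obtain ⟨hbox, hlt⟩ := not_or.1 hC
    rw [not_le] at hlt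
    rw [hfactor, thresholdVol_of_lt hlt]
    refine le_trans ?_ (hM_drift x₁ x₂ hlt hbox)
    rw [mul_left_comm]
    gcongr
    exact integral_thresholdVol_pow_le_driftRate (hη₁.pow_const 2) hY0 hm1 hμ2p hμ2m hμ2mp hω hα
      hk (by nlinarith)
  · rw [hfactor]
    refine le_trans ?_ (le_max_left _ _)
    gcongr
    exact integral_thresholdVol_pow_le_of_le hY0 hμ2p hω.le hα
      (thresholdVol_nonneg hω.le hα hx₁) (thresholdVol_le_of_le_or_le hα hM.le hx₁ hC)

/-- Drift condition for the existence of `2p`-th order moments: under Assumption A with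
`k > 0`, if for some integer `m ≥ 1`
`α^{2p+m-1} μ_{2p} μ_{2m}^{(m-1)/m} μ_{2mp}^{1/m} < k^{m-1}` (condition (3.7)), then
there are `β, M, b > 0` such that, with `C = [0,M]² ∪ {x₁ ≤ k x₂}`,
`E[(η₂²)^p ψ(ψ(x) η₁², x₁)^p] ≤ (1-β) x₁^p - β` outside `C` and `≤ b` on `C`. -/
theorem stmt17
    {Ω' : Type*} [MeasurableSpace Ω'] (P : Measure Ω') [IsProbabilityMeasure P]
    (ω α k : ℝ) (hω : 0 < ω) (hα : 0 ≤ α) (hk : 0 < k)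
    (ψ : ℝ → ℝ → ℝ)
    (hψ : ∀ x₁ x₂, ψ x₁ x₂ = ω + α * x₁ * (if k * x₂ < x₁ then 1 else 0))
    (η₁ η₂ : Ω' → ℝ) (hη₁ : Measurable η₁) (hη₂ : Measurable η₂)
    (hindep : IndepFun η₁ η₂ P)
    (f : ℝ → ℝ≥0∞) (hf : Measurable f) (hfpos : ∀ x, 0 ≤ x → 0 < f x)
    (hd₁ : Measure.map (fun z => (η₁ z) ^ 2) P = (volume.restrict (Ici (0 : ℝ))).withDensity f)
    (hd₂ : Measure.map (fun z => (η₂ z) ^ 2) P = (volume.restrict (Ici (0 : ℝ))).withDensity f)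
    (hint₁ : Integrable η₁ P) (hint₂ : Integrable η₂ P)
    (hm₁ : ∫ z, η₁ z ∂P = 0) (hm₂ : ∫ z, η₂ z ∂P = 0)
    (hv₁ : ∫ z, (η₁ z) ^ 2 ∂P = 1) (hv₂ : ∫ z, (η₂ z) ^ 2 ∂P = 1)
    (p : ℕ) (hp : 1 ≤ p) (m : ℕ) (hm1 : 1 ≤ m)
    (hμ2p : Integrable (fun z => ((η₁ z) ^ 2) ^ p) P)
    (hμ2p' : Integrable (fun z => ((η₂ z) ^ 2) ^ p) P)
    (hμ2m : Integrable (fun z => ((η₁ z) ^ 2) ^ m) P)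
    (hμ2mp : Integrable (fun z => ((η₁ z) ^ 2) ^ (m * p)) P)
    (hcond : α ^ (2 * p + m - 1) * (∫ z, ((η₁ z) ^ 2) ^ p ∂P) *
        (∫ z, ((η₁ z) ^ 2) ^ m ∂P) ^ (((m : ℝ) - 1) / (m : ℝ)) *
        (∫ z, ((η₁ z) ^ 2) ^ (m * p) ∂P) ^ (1 / (m : ℝ)) < k ^ (m - 1)) :
    ∃ β > (0 : ℝ), ∃ M > (0 : ℝ), ∃ b > (0 : ℝ),
      ∀ x₁ x₂ : ℝ, 0 ≤ x₁ → 0 ≤ x₂ →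
        (¬((x₁ ≤ M ∧ x₂ ≤ M) ∨ x₁ ≤ k * x₂) →
          ∫ z, ((η₂ z) ^ 2) ^ p * (ψ (ψ x₁ x₂ * (η₁ z) ^ 2) x₁) ^ p ∂P ≤
            (1 - β) * x₁ ^ p - β) ∧
        (((x₁ ≤ M ∧ x₂ ≤ M) ∨ x₁ ≤ k * x₂) →
          ∫ z, ((η₂ z) ^ 2) ^ p * (ψ (ψ x₁ x₂ * (η₁ z) ^ 2) x₁) ^ p ∂P ≤ b) :=
  stmt17_general P ω α k hω hα hk ψ hψ η₁ η₂ hη₁ hη₂ hindep f hd₁ hd₂ p hp m hm1 hμ2p hμ2m hμ2mp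
    hcond
end
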